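/- arXiv:2105.05759 — 2 statements merged into one kernel-verified Lean document; each statement's English description precedes it below -/
import Mathlib

section
/- The subgroup K = {(a, b√3; c√3, d) ∈ G : c ≡ 0 (mod 2)} has index 3 in G. (This is the index |G₃ : G₃ ∩ G₃^{M_2}| for the degree-2 modular equation in signature 3.) -/
/-- The subgroup of `SL(2, ℝ)` of matrices of the form `(a, b√3; c√3, d)` with
`a, b, c, d ∈ ℤ`, `ad − 3bc = 1` and `m ∣ c`. -/
def sqrt3Group (m : ℤ) : Subgroup (Matrix.SpecialLinearGroup (Fin 2) ℝ) where
  carrier := {A | ∃ a b c d : ℤ, (A : Matrix (Fin 2) (Fin 2) ℝ) =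
      !![(a:ℝ), (b:ℝ) * Real.sqrt 3; (c:ℝ) * Real.sqrt 3, (d:ℝ)] ∧
      a * d - 3 * b * c = 1 ∧ m ∣ c}
  one_mem' := by
    refine ⟨1, 0, 0, 1, ?_, by ring, dvd_zero m⟩
    rw [Matrix.SpecialLinearGroup.coe_one, Matrix.one_fin_two]
    norm_num
  mul_mem' := by
    rintro A B ⟨a₁, b₁, c₁, d₁, hA, hdA, hcA⟩ ⟨a₂, b₂, c₂, d₂, hB, hdB, hcB⟩
    have h3 : Real.sqrt 3 * Real.sqrt 3 = 3 := Real.mul_self_sqrt (by norm_num)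
    refine ⟨a₁ * a₂ + 3 * b₁ * c₂, a₁ * b₂ + b₁ * d₂, c₁ * a₂ + d₁ * c₂,
      3 * c₁ * b₂ + d₁ * d₂, ?_, ?_, ?_⟩
    · rw [Matrix.SpecialLinearGroup.coe_mul, hA, hB, Matrix.mul_fin_two]
      ext i j
      fin_cases i <;> fin_cases j <;> push_cast <;> simp
      · linear_combination ((b₁ : ℝ) * (c₂ : ℝ)) * h3
      · ring
      · ring
      · linear_combination ((c₁ : ℝ) * (b₂ : ℝ)) * h3
    · linear_combination (a₂ * d₂ - 3 * b₂ * c₂) * hdA + hdB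
    · exact dvd_add (hcA.mul_right _) (hcB.mul_left _)
  inv_mem' := by
    rintro A ⟨a, b, c, d, hA, hdA, hcA⟩
    refine ⟨d, -b, -c, a, ?_, by linear_combination hdA, dvd_neg.mpr hcA⟩
    rw [Matrix.SpecialLinearGroup.coe_inv, hA, Matrix.adjugate_fin_two]
    ext i j
    fin_cases i <;> fin_cases j <;> push_cast <;> simp

/-!
The class of `A = (a, b√3; c√3, d) ∈ G` modulo `K` is read off from its first column mod 2:
for `A, B ∈ G` the lower left entry of `A⁻¹B` is `(a c' − c a')√3`, so `A⁻¹B ∈ K` iff the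
columns `(a, c)` and `(a', c')` agree in `ℙ¹(𝔽₂)`. Since `ad − 3bc = 1`, the column `(a, c)` is
primitive, hence nonzero mod 2, and the three points of `ℙ¹(𝔽₂)` are all attained.
-/

open Matrix
open scoped MatrixGroups

theorem Subgroup.relIndex_eq_card_of_leftTransversal {G ι : Type*} [Group G]
    {H K : Subgroup G} (g : ι → G) (hg : ∀ i, g i ∈ K)
    (hcover : ∀ x ∈ K, ∃ i, (g i)⁻¹ * x ∈ H) (hdistinct : ∀ i j, (g i)⁻¹ * g j ∈ H → i = j) :
    H.relIndex K = Nat.card ι := by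
  let f : ι → K ⧸ H.subgroupOf K := fun i ↦ (⟨g i, hg i⟩ : K)
  have hf : Function.Bijective f := by
    refine ⟨fun i j hij ↦ hdistinct i j ?_, ?_⟩
    · simpa [f, QuotientGroup.eq, Subgroup.mem_subgroupOf] using hij
    · rintro ⟨x, hx⟩
      obtain ⟨i, hi⟩ := hcover x hx
      exact ⟨i, QuotientGroup.eq.mpr (by simpa [Subgroup.mem_subgroupOf] using hi)⟩
  exact (Nat.card_eq_of_bijective f hf).symm

noncomputable def sqrt3Matrix (a b c d : ℤ) : Matrix (Fin 2) (Fin 2) ℝ :=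
  !![(a:ℝ), (b:ℝ) * Real.sqrt 3; (c:ℝ) * Real.sqrt 3, (d:ℝ)]

section sqrt3Matrix

variable {a b c d a' b' c' d' : ℤ}

lemma sqrt3Matrix_inj :
    sqrt3Matrix a b c d = sqrt3Matrix a' b' c' d' ↔ a = a' ∧ b = b' ∧ c = c' ∧ d = d' := by
  have h3 : Real.sqrt 3 ≠ 0 := by positivity
  constructor
  · intro h
    have h00 := congrFun (congrFun h 0) 0
    have h01 := congrFun (congrFun h 0) 1
    have h10 := congrFun (congrFun h 1) 0
    have h11 := congrFun (congrFun h 1) 1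
    simp only [sqrt3Matrix, of_apply, cons_val', cons_val_zero, cons_val_one, cons_val_fin_one,
      Int.cast_inj, mul_eq_mul_right_iff, h3, or_false] at h00 h01 h10 h11
    exact ⟨h00, h01, h10, h11⟩
  · rintro ⟨rfl, rfl, rfl, rfl⟩
    rfl

lemma det_sqrt3Matrix : (sqrt3Matrix a b c d).det = ((a * d - 3 * b * c : ℤ) : ℝ) := by
  have h3 : Real.sqrt 3 * Real.sqrt 3 = 3 := Real.mul_self_sqrt (by norm_num)
  rw [sqrt3Matrix, det_fin_two_of]
  push_cast
  linear_combination (-(b : ℝ) * c) * h3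

lemma adjugate_sqrt3Matrix : adjugate (sqrt3Matrix a b c d) = sqrt3Matrix d (-b) (-c) a := by
  rw [sqrt3Matrix, sqrt3Matrix, adjugate_fin_two_of]
  push_cast
  simp only [neg_mul]

lemma sqrt3Matrix_mul :
    sqrt3Matrix a b c d * sqrt3Matrix a' b' c' d' =
      sqrt3Matrix (a * a' + 3 * b * c') (a * b' + b * d') (c * a' + d * c')
        (3 * c * b' + d * d') := by
  have h3 : Real.sqrt 3 * Real.sqrt 3 = 3 := Real.mul_self_sqrt (by norm_num)
  rw [sqrt3Matrix, sqrt3Matrix, sqrt3Matrix, mul_fin_two]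
  ext i j
  fin_cases i <;> fin_cases j <;>
    simp only [Fin.zero_eta, Fin.mk_one, of_apply, cons_val', cons_val_zero, cons_val_one,
      cons_val_fin_one, Int.cast_add, Int.cast_mul, Int.cast_ofNat]
  · linear_combination (b * c' : ℝ) * h3
  · ring
  · ring
  · linear_combination (c * b' : ℝ) * h3

end sqrt3Matrix

lemma mem_sqrt3Group_iff {m : ℤ} {A : SL(2, ℝ)} :
    A ∈ sqrt3Group m ↔
      ∃ a b c d : ℤ, (A : Matrix (Fin 2) (Fin 2) ℝ) = sqrt3Matrix a b c d ∧ m ∣ c := by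
  constructor
  · rintro ⟨a, b, c, d, hA, -, hc⟩
    exact ⟨a, b, c, d, hA, hc⟩
  · rintro ⟨a, b, c, d, hA, hc⟩
    have hdet : ((a * d - 3 * b * c : ℤ) : ℝ) = 1 := by
      rw [← det_sqrt3Matrix, ← hA, A.det_coe]
    exact ⟨a, b, c, d, hA, by exact_mod_cast hdet, hc⟩

lemma inv_mul_mem_sqrt3Group_iff {m a b c d a' b' c' d' : ℤ} {A B : SL(2, ℝ)}
    (hA : (A : Matrix (Fin 2) (Fin 2) ℝ) = sqrt3Matrix a b c d)
    (hB : (B : Matrix (Fin 2) (Fin 2) ℝ) = sqrt3Matrix a' b' c' d') :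
    A⁻¹ * B ∈ sqrt3Group m ↔ m ∣ a * c' - c * a' := by
  have hAB : (↑(A⁻¹ * B) : Matrix (Fin 2) (Fin 2) ℝ) =
      sqrt3Matrix (d * a' - 3 * b * c') (d * b' - b * d') (a * c' - c * a')
        (a * d' - 3 * c * b') := by
    rw [Matrix.SpecialLinearGroup.coe_mul, Matrix.SpecialLinearGroup.coe_inv, hA, hB,
      adjugate_sqrt3Matrix, sqrt3Matrix_mul]
    exact sqrt3Matrix_inj.mpr ⟨by ring, by ring, by ring, by ring⟩
  rw [mem_sqrt3Group_iff]
  constructor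
  · rintro ⟨a₀, b₀, c₀, d₀, h, hm⟩
    rw [hAB, sqrt3Matrix_inj] at h
    exact h.2.2.1 ▸ hm
  · exact fun hm ↦ ⟨_, _, _, _, hAB, hm⟩

/-- The first columns `(1, 0)`, `(2, 1)`, `(1, 1)` reduce to the three points of `ℙ¹(𝔽₂)`. -/
noncomputable def sqrt3GroupCosetRep : Fin 3 → SL(2, ℝ) :=
  ![⟨sqrt3Matrix 1 0 0 1, by rw [det_sqrt3Matrix]; norm_num⟩,
    ⟨sqrt3Matrix 2 1 1 2, by rw [det_sqrt3Matrix]; norm_num⟩,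
    ⟨sqrt3Matrix 1 0 1 1, by rw [det_sqrt3Matrix]; norm_num⟩]

lemma sqrt3GroupCosetRep_mem (i : Fin 3) : sqrt3GroupCosetRep i ∈ sqrt3Group 1 := by
  rw [mem_sqrt3Group_iff]
  fin_cases i
  · exact ⟨1, 0, 0, 1, rfl, one_dvd _⟩
  · exact ⟨2, 1, 1, 2, rfl, one_dvd _⟩
  · exact ⟨1, 0, 1, 1, rfl, one_dvd _⟩

lemma exists_sqrt3GroupCosetRep_inv_mul_mem {B : SL(2, ℝ)} (hB : B ∈ sqrt3Group 1) :
    ∃ i, (sqrt3GroupCosetRep i)⁻¹ * B ∈ sqrt3Group 2 := by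
  obtain ⟨a, b, c, d, hB, hdet, -⟩ := hB
  have hcop : IsCoprime a c := ⟨d, -3 * b, by linear_combination hdet⟩
  have hpar : ¬ (2 ∣ a ∧ 2 ∣ c) := fun ⟨ha, hc⟩ ↦ by
    have := Int.isUnit_iff.mp (hcop.isUnit_of_dvd' ha hc)
    omega
  by_cases hc : 2 ∣ c
  · exact ⟨0, (inv_mul_mem_sqrt3Group_iff rfl hB).mpr (by omega)⟩
  by_cases ha : 2 ∣ a
  · exact ⟨1, (inv_mul_mem_sqrt3Group_iff rfl hB).mpr (by omega)⟩
  · exact ⟨2, (inv_mul_mem_sqrt3Group_iff rfl hB).mpr (by omega)⟩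

lemma eq_of_sqrt3GroupCosetRep_inv_mul_mem {i j : Fin 3}
    (h : (sqrt3GroupCosetRep i)⁻¹ * sqrt3GroupCosetRep j ∈ sqrt3Group 2) : i = j := by
  fin_cases i <;> fin_cases j <;> rw [inv_mul_mem_sqrt3Group_iff rfl rfl] at h <;>
    first | rfl | norm_num at h

/-- The subgroup `K = {(a, b√3; c√3, d) ∈ G : 2 ∣ c}` (which equals `G ∩ D₂⁻¹GD₂` with
`D₂ = diag(2,1)`) has index 3 in `G = sqrt3Group 1`, the group of all matrices
`(a, b√3; c√3, d)` with `a, b, c, d ∈ ℤ` and `ad − 3bc = 1`. -/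
theorem index_K_in_G3_M2_eq_three :
    ((sqrt3Group 2).relIndex (sqrt3Group 1)) = 3 := by
  rw [Subgroup.relIndex_eq_card_of_leftTransversal sqrt3GroupCosetRep sqrt3GroupCosetRep_mem
      (fun _ ↦ exists_sqrt3GroupCosetRep_inv_mul_mem)
      (fun _ _ ↦ eq_of_sqrt3GroupCosetRep_inv_mul_mem),
    Nat.card_fin]
end

section
/- For every z ∈ (0,1), set α = 1 − z² and β = ((1−z)/(1+z))². Then α, β ∈ (0,1) and G(1−β)/G(β) = 2·G(1−α)/G(α); that is, (α, β) solves the classical modular equation of degree 2 (equivalently μ(s) = 2μ(r) with r² = α, s² = β). -/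
/-- The hypergeometric function `₂F₁(1/2, 1/2; 1; x)`, defined for `x ∈ (0,1)` by its
power series `∑ ((1/2)ₙ (1/2)ₙ / (n!)²) xⁿ`, where `(a)ₙ` is the rising factorial. -/
noncomputable def G (x : ℝ) : ℝ :=
  ∑' n : ℕ, (Polynomial.eval (1/2 : ℝ) (ascPochhammer ℝ n) *
      Polynomial.eval (1/2 : ℝ) (ascPochhammer ℝ n) / (n.factorial : ℝ)^2) * x^n

/-!
Termwise integration of the binomial series of `(1 - m sin² θ)^(-1/2)` against Wallis' integrals
gives `G m = (2/π) ∫₀^{π/2} dθ / √(1 - m sin² θ)`, and the substitution `t = b tan θ` turns this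
into Gauss's integral `(2/π) ∫₀^∞ dt / √((t² + 1)(t² + b²))` with `b² = 1 - m`. Gauss's integral
is unchanged when `(a, b)` is replaced by its arithmetic and geometric means (substitute
`t = (u - ab/u)/2`), which yields Landen's transformation `G (4t/(1+t)²) = (1+t) G (t²)`.
Applied at `t = z` it gives `G (1 - β) = (1 + z) G (1 - α)`, and applied at `t = (1-z)/(1+z)` it
gives `G α = 2/(1+z) G β`.
-/

open Real Set MeasureTheory
open scoped Nat

noncomputable def invSqrtCoeff (n : ℕ) : ℝ := (ascPochhammer ℝ n).eval (1/2) / n !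

lemma invSqrtCoeff_eq_choose (n : ℕ) : invSqrtCoeff n = Ring.choose (1/2 + n - 1 : ℝ) n := by
  rw [Ring.choose_eq_smul, Polynomial.descPochhammer_smeval_eq_ascPochhammer,
    Polynomial.ascPochhammer_smeval_eq_eval, invSqrtCoeff, smul_eq_mul]
  ring_nf

lemma hasSum_invSqrtCoeff_mul_pow {x : ℝ} (hx : |x| < 1) :
    HasSum (fun n => invSqrtCoeff n * x ^ n) (√(1 - x))⁻¹ := by
  have := (one_div_one_sub_rpow_hasFPowerSeriesOnBall_zero (1/2)).hasSum
    (y := x) (by simpa [enorm_eq_nnnorm, ← NNReal.coe_lt_coe] using hx)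
  simpa [FormalMultilinearSeries.ofScalars_apply_eq, invSqrtCoeff_eq_choose, sqrt_eq_rpow,
    mul_comm] using this

lemma invSqrtCoeff_zero : invSqrtCoeff 0 = 1 := by simp [invSqrtCoeff]

lemma invSqrtCoeff_succ (n : ℕ) :
    invSqrtCoeff (n + 1) = (2 * n + 1) / (2 * n + 2) * invSqrtCoeff n := by
  simp only [invSqrtCoeff, ascPochhammer_succ_eval, Nat.factorial_succ, Nat.cast_mul]
  push_cast
  field_simp
  ring

lemma invSqrtCoeff_nonneg (n : ℕ) : 0 ≤ invSqrtCoeff n := by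
  induction n with
  | zero => simp [invSqrtCoeff_zero]
  | succ n ih => rw [invSqrtCoeff_succ]; positivity

lemma invSqrtCoeff_le_one (n : ℕ) : invSqrtCoeff n ≤ 1 := by
  induction n with
  | zero => simp [invSqrtCoeff_zero]
  | succ n ih =>
    rw [invSqrtCoeff_succ]
    have : (2 * n + 1 : ℝ) / (2 * n + 2) ≤ 1 := by rw [div_le_one (by positivity)]; linarith
    exact mul_le_one₀ this (invSqrtCoeff_nonneg n) ih

lemma G_eq_tsum (x : ℝ) : G x = ∑' n, invSqrtCoeff n ^ 2 * x ^ n := by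
  simp only [G, invSqrtCoeff, sq, mul_div_mul_comm]

theorem integral_sin_pow_two_mul (n : ℕ) :
    ∫ x in 0..π/2, sin x ^ (2 * n) = π / 2 * invSqrtCoeff n := by
  induction n with
  | zero => simp [invSqrtCoeff_zero]
  | succ n ih =>
    rw [mul_add_one, integral_sin_pow, ih, invSqrtCoeff_succ, sin_zero, cos_pi_div_two]
    push_cast
    ring

theorem G_eq_integral {m : ℝ} (hm : |m| < 1) :
    G m = 2 / π * ∫ x in 0..π/2, (√(1 - m * sin x ^ 2))⁻¹ := by
  have hsin : ∀ x, |m * sin x ^ 2| ≤ |m| := fun x => by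
    rw [abs_mul, abs_of_nonneg (sq_nonneg (sin x))]
    exact mul_le_of_le_one_right (abs_nonneg m) (sin_sq_le_one x)
  have hbound : ∀ n x, ‖invSqrtCoeff n * (m * sin x ^ 2) ^ n‖ ≤ |m| ^ n := fun n x => by
    rw [norm_mul, norm_pow, Real.norm_eq_abs, Real.norm_eq_abs,
      abs_of_nonneg (invSqrtCoeff_nonneg n)]
    exact (mul_le_of_le_one_left (by positivity) (invSqrtCoeff_le_one n)).trans
      (pow_le_pow_left₀ (abs_nonneg _) (hsin x) n)
  have hsum := intervalIntegral.hasSum_integral_of_dominated_convergence (μ := volume)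
    (a := 0) (b := π / 2) (F := fun n x => invSqrtCoeff n * (m * sin x ^ 2) ^ n)
    (fun n _ => |m| ^ n) (fun n => (by fun_prop : Continuous _).aestronglyMeasurable)
    (fun n => Filter.Eventually.of_forall fun x _ => hbound n x)
    (Filter.Eventually.of_forall fun _ _ => summable_geometric_of_lt_one (abs_nonneg m) hm)
    intervalIntegrable_const
    (Filter.Eventually.of_forall fun x _ =>
      hasSum_invSqrtCoeff_mul_pow ((hsin x).trans_lt hm))
  have hterm : ∀ n : ℕ, ∫ x in 0..π/2, invSqrtCoeff n * (m * sin x ^ 2) ^ n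
      = π / 2 * (invSqrtCoeff n ^ 2 * m ^ n) := fun n => by
    simp only [mul_pow, ← pow_mul, intervalIntegral.integral_const_mul,
      integral_sin_pow_two_mul]
    ring
  simp only [hterm] at hsum
  rw [G_eq_tsum, ← (hsum.mul_left (2 / π)).tsum_eq]
  congr 1 with n
  field_simp

/-- Gauss's integral, equal to `π / (2 * AGM(a, b))` for `a, b > 0`. -/
noncomputable def agmIntegral (a b : ℝ) : ℝ :=
  ∫ t in Ioi 0, (√((t ^ 2 + a ^ 2) * (t ^ 2 + b ^ 2)))⁻¹

theorem integral_inv_sqrt_eq_agmIntegral (a : ℝ) {b : ℝ} (hb : 0 < b) :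
    ∫ x in 0..π/2, (√(a ^ 2 * cos x ^ 2 + b ^ 2 * sin x ^ 2))⁻¹ = agmIntegral a b := by
  have hcos : ∀ x ∈ Ioo 0 (π / 2), 0 < cos x := fun x hx =>
    cos_pos_of_mem_Ioo ⟨by linarith [hx.1, pi_pos], hx.2⟩
  have hderiv : ∀ x ∈ Ioo 0 (π / 2),
      HasDerivWithinAt (fun x => b * tan x) (b / cos x ^ 2) (Ioo 0 (π / 2)) x := fun x hx => by
    simpa [div_eq_mul_inv] using
      ((hasDerivAt_tan (hcos x hx).ne').const_mul b).hasDerivWithinAt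
  have hinj : InjOn (fun x => b * tan x) (Ioo 0 (π / 2)) := fun x hx y hy hxy =>
    strictMonoOn_tan.injOn ⟨by linarith [hx.1, pi_pos], hx.2⟩ ⟨by linarith [hy.1, pi_pos], hy.2⟩
      (mul_left_cancel₀ hb.ne' hxy)
  have himage : (fun x => b * tan x) '' Ioo 0 (π / 2) = Ioi 0 := by
    refine Subset.antisymm ?_ fun t (ht : 0 < t) =>
      ⟨arctan (t / b), ⟨?_, arctan_lt_pi_div_two _⟩, ?_⟩
    · rintro _ ⟨x, hx, rfl⟩
      exact mul_pos hb (tan_pos_of_pos_of_lt_pi_div_two hx.1 hx.2)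
    · simpa using arctan_strictMono (div_pos ht hb)
    · simp only [tan_arctan]
      field_simp
  rw [agmIntegral, ← himage,
    integral_image_eq_integral_abs_deriv_smul measurableSet_Ioo hderiv hinj,
    intervalIntegral.integral_of_le (by positivity), integral_Ioc_eq_integral_Ioo]
  refine setIntegral_congr_fun measurableSet_Ioo fun x hx => ?_
  have hc := hcos x hx
  have hfactor : ((b * tan x) ^ 2 + a ^ 2) * ((b * tan x) ^ 2 + b ^ 2)
      = (a ^ 2 * cos x ^ 2 + b ^ 2 * sin x ^ 2) * (b / cos x ^ 2) ^ 2 := by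
    rw [tan_eq_sin_div_cos]
    field_simp
    linear_combination (a ^ 2 * cos x ^ 2 + b ^ 2 * sin x ^ 2) * sin_sq_add_cos_sq x
  simp only [smul_eq_mul, hfactor,
    sqrt_mul (by positivity : 0 ≤ a ^ 2 * cos x ^ 2 + b ^ 2 * sin x ^ 2),
    sqrt_sq (by positivity : 0 ≤ b / cos x ^ 2), abs_of_pos (by positivity : 0 < b / cos x ^ 2)]
  field_simp

theorem agmIntegral_mul_mul {c : ℝ} (hc : 0 < c) (a b : ℝ) :
    agmIntegral (c * a) (c * b) = c⁻¹ * agmIntegral a b := by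
  have hsubst := integral_comp_mul_left_Ioi'
    (fun t => (√((t ^ 2 + (c * a) ^ 2) * (t ^ 2 + (c * b) ^ 2)))⁻¹) 0 hc
  have hintegrand : ∀ t, (√(((c * t) ^ 2 + (c * a) ^ 2) * ((c * t) ^ 2 + (c * b) ^ 2)))⁻¹
      = (c ^ 2)⁻¹ * (√((t ^ 2 + a ^ 2) * (t ^ 2 + b ^ 2)))⁻¹ := fun t => by
    rw [show ((c * t) ^ 2 + (c * a) ^ 2) * ((c * t) ^ 2 + (c * b) ^ 2)
        = (c ^ 2) ^ 2 * ((t ^ 2 + a ^ 2) * (t ^ 2 + b ^ 2)) by ring,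
      sqrt_mul (by positivity), sqrt_sq (by positivity), mul_inv]
  simp only [hintegrand, integral_const_mul, mul_zero, smul_eq_mul] at hsubst
  rw [agmIntegral, agmIntegral, ← hsubst]
  field_simp

lemma injOn_half_sub_mul_inv {c : ℝ} (hc : 0 ≤ c) :
    InjOn (fun u : ℝ => (u - c * u⁻¹) / 2) (Ioi 0) := fun u (hu : 0 < u) v (hv : 0 < v) huv => by
  have : (u - v) * (u * v + c) = 0 := by
    field_simp at huv
    linear_combination huv
  rcases mul_eq_zero.1 this with h | h
  · linarith
  · nlinarith [mul_pos hu hv]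

lemma image_half_sub_mul_inv {c : ℝ} (hc : 0 < c) :
    (fun u : ℝ => (u - c * u⁻¹) / 2) '' Ioi 0 = univ := by
  refine eq_univ_of_forall fun t => ?_
  have hs := sq_sqrt (by positivity : 0 ≤ t ^ 2 + c)
  have hpos : 0 < t + √(t ^ 2 + c) := by nlinarith [sqrt_nonneg (t ^ 2 + c)]
  refine ⟨t + √(t ^ 2 + c), hpos, ?_⟩
  field_simp
  linear_combination hs

theorem agmIntegral_arith_geom {a b : ℝ} (ha : 0 < a) (hb : 0 < b) :
    agmIntegral ((a + b) / 2) √(a * b) = agmIntegral a b := by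
  set f : ℝ → ℝ := fun u => (u - a * b * u⁻¹) / 2
  have hab : 0 < a * b := mul_pos ha hb
  have hderiv : ∀ u ∈ Ioi (0 : ℝ),
      HasDerivWithinAt f ((u ^ 2 + a * b) / (2 * u ^ 2)) (Ioi 0) u := fun u (hu : 0 < u) => by
    refine (((hasDerivAt_id' u).sub ((hasDerivAt_inv hu.ne').const_mul (a * b))).div_const
      2).hasDerivWithinAt.congr_deriv ?_
    field_simp
    ring
  have hsubst := integral_image_eq_integral_abs_deriv_smul measurableSet_Ioi hderiv
    (injOn_half_sub_mul_inv hab.le)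
    (fun t => (√((t ^ 2 + ((a + b) / 2) ^ 2) * (t ^ 2 + √(a * b) ^ 2)))⁻¹)
  rw [image_half_sub_mul_inv hab, setIntegral_univ] at hsubst
  have hleft : ∫ t, (√((t ^ 2 + ((a + b) / 2) ^ 2) * (t ^ 2 + √(a * b) ^ 2)))⁻¹
      = 2 * agmIntegral ((a + b) / 2) √(a * b) := by
    simp only [agmIntegral, ← integral_comp_abs, sq_abs]
  have hright : ∫ u in Ioi 0, |(u ^ 2 + a * b) / (2 * u ^ 2)| •
      (√((f u ^ 2 + ((a + b) / 2) ^ 2) * (f u ^ 2 + √(a * b) ^ 2)))⁻¹ = 2 * agmIntegral a b := by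
    rw [agmIntegral, ← integral_const_mul]
    refine setIntegral_congr_fun measurableSet_Ioi fun u (hu : 0 < u) => ?_
    have hfactor : (f u ^ 2 + ((a + b) / 2) ^ 2) * (f u ^ 2 + √(a * b) ^ 2)
        = ((u ^ 2 + a ^ 2) * (u ^ 2 + b ^ 2)) * ((u ^ 2 + a * b) / (4 * u ^ 2)) ^ 2 := by
      simp only [f, sq_sqrt hab.le]
      field_simp
      ring
    simp only [smul_eq_mul, hfactor,
      sqrt_mul (by positivity : 0 ≤ (u ^ 2 + a ^ 2) * (u ^ 2 + b ^ 2)),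
      sqrt_sq (by positivity : 0 ≤ (u ^ 2 + a * b) / (4 * u ^ 2)),
      abs_of_pos (by positivity : 0 < (u ^ 2 + a * b) / (2 * u ^ 2))]
    field_simp
    ring
  linarith

theorem G_one_sub_sq {b : ℝ} (hb0 : 0 < b) (hb1 : b ≤ 1) :
    G (1 - b ^ 2) = 2 / π * agmIntegral 1 b := by
  have hm : |1 - b ^ 2| < 1 := by
    rw [abs_lt]; constructor <;> nlinarith
  rw [G_eq_integral hm, ← integral_inv_sqrt_eq_agmIntegral 1 hb0]
  congr! 5 with x
  linear_combination -sin_sq_add_cos_sq x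

theorem G_landen {t : ℝ} (ht0 : 0 ≤ t) (ht1 : t < 1) :
    G (4 * t / (1 + t) ^ 2) = (1 + t) * G (t ^ 2) := by
  set b := (1 - t) / (1 + t) with hb
  have hb0 : 0 < b := div_pos (by linarith) (by linarith)
  have hb1 : b ≤ 1 := by rw [div_le_one (by linarith)]; linarith
  set k := √(1 - t ^ 2)
  have hk0 : 0 < k := sqrt_pos.2 (by nlinarith)
  have hk1 : k ≤ 1 := sqrt_le_one.2 (by nlinarith)
  have hmean : (1 + b) / 2 = (1 + t)⁻¹ * 1 := by
    rw [hb]; field_simp; ring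
  have hgeom : √(1 * b) = (1 + t)⁻¹ * k := by
    rw [one_mul, show b = ((1 + t)⁻¹) ^ 2 * (1 - t ^ 2) by rw [hb]; field_simp; ring,
      sqrt_mul (by positivity), sqrt_sq (by positivity)]
  calc G (4 * t / (1 + t) ^ 2) = G (1 - b ^ 2) := by
        congr 1; rw [hb]; field_simp; ring
    _ = 2 / π * agmIntegral 1 b := G_one_sub_sq hb0 hb1
    _ = 2 / π * agmIntegral ((1 + t)⁻¹ * 1) ((1 + t)⁻¹ * k) := by
        rw [← hmean, ← hgeom, agmIntegral_arith_geom one_pos hb0]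
    _ = (1 + t) * (2 / π * agmIntegral 1 k) := by
        rw [agmIntegral_mul_mul (by positivity), inv_inv]; ring
    _ = (1 + t) * G (t ^ 2) := by
        rw [← G_one_sub_sq hk0 hk1, sq_sqrt (by nlinarith), sub_sub_cancel]

/-- Parametrization of the solutions of the classical modular equation of degree 2. -/
theorem param_classical_deg2 (z : ℝ) (hz : z ∈ Set.Ioo (0:ℝ) 1)
    (α β : ℝ) (hαz : α = 1 - z^2) (hβz : β = ((1 - z) / (1 + z))^2) :
    α ∈ Set.Ioo (0:ℝ) 1 ∧ β ∈ Set.Ioo (0:ℝ) 1 ∧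
      G (1 - β) / G β = 2 * (G (1 - α) / G α) := by
  obtain ⟨hz0, hz1⟩ := hz
  set x := (1 - z) / (1 + z) with hx
  have hx0 : 0 < x := div_pos (by linarith) (by linarith)
  have hx1 : x < 1 := by rw [div_lt_one (by linarith)]; linarith
  subst hαz hβz
  refine ⟨⟨by nlinarith, by nlinarith⟩, ⟨by positivity, by nlinarith⟩, ?_⟩
  have hβ : G (1 - x ^ 2) = (1 + z) * G (1 - (1 - z ^ 2)) := by
    rw [show 1 - x ^ 2 = 4 * z / (1 + z) ^ 2 by rw [hx]; field_simp; ring, sub_sub_cancel]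
    exact G_landen hz0.le hz1
  have hα : G (1 - z ^ 2) = 2 / (1 + z) * G (x ^ 2) := by
    have h := G_landen hx0.le hx1
    rwa [show 4 * x / (1 + x) ^ 2 = 1 - z ^ 2 by rw [hx]; field_simp; ring,
      show 1 + x = 2 / (1 + z) by rw [hx]; field_simp; ring] at h
  rw [hβ, hα, div_mul_eq_mul_div, div_div_eq_mul_div]
  ring
end
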